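/- Fix ε > 0. The Pruned Plurality Veto rule, which restricts attention to alternatives of plurality score at least εn/((6+ε)m) and then applies any rule with metric distortion at most 3 on the restricted profile, achieves metric distortion at most 9 + ε. -/

import Mathlib

/-!
Call a voter good if her top choice survives the pruning. Each pruned alternative is the top
choice of fewer than `τ = εn/((6+ε)m)` voters, so at most `mτ = εn/(6+ε)` voters are bad and at
least `6n/(6+ε)` are good. Fix any alternative `Z` and let `i` be the good voter closest to `Z`,
at distance `δ`; then `#good · δ ≤ SC(Z)`. The top choice `W` of `i` is unpruned and, by
consistency, `d(i, W) ≤ δ`, so `d(Z, W) ≤ 2δ` and `SC(W) ≤ SC(Z) + 2nδ ≤ (3 + ε/3) SC(Z)`.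
The base rule loses another factor `3` against `W`.
-/

open Finset

namespace MetricDistortion

variable {N A : Type*}

section SocialCost

variable [Fintype N] (d : N ⊕ A → N ⊕ A → ℝ)

def socialCost (X : A) : ℝ :=
  ∑ i, d (.inl i) (.inr X)

variable {d}

theorem exists_mem_card_mul_le_socialCost (hnn : ∀ a b, 0 ≤ d a b) {G : Finset N}
    (hG : G.Nonempty) (Z : A) :
    ∃ i ∈ G, #G * d (.inl i) (.inr Z) ≤ socialCost d Z := by
  obtain ⟨i, hi, hmin⟩ := G.exists_min_image (fun j => d (.inl j) (.inr Z)) hG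
  refine ⟨i, hi, ?_⟩
  calc (#G : ℝ) * d (.inl i) (.inr Z) = #G • d (.inl i) (.inr Z) := (nsmul_eq_mul _ _).symm
    _ ≤ ∑ j ∈ G, d (.inl j) (.inr Z) := card_nsmul_le_sum _ _ _ hmin
    _ ≤ socialCost d Z := sum_le_univ_sum_of_nonneg fun _ => hnn _ _

theorem socialCost_le_add_card_mul (htri : ∀ a b c, d a c ≤ d a b + d b c) (Z W : A) :
    socialCost d W ≤ socialCost d Z + Fintype.card N * d (.inr Z) (.inr W) := by
  calc socialCost d W ≤ ∑ i, (d (.inl i) (.inr Z) + d (.inr Z) (.inr W)) :=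
        sum_le_sum fun _ _ => htri _ _ _
    _ = socialCost d Z + Fintype.card N * d (.inr Z) (.inr W) := by
        rw [sum_add_distrib, sum_const, card_univ, nsmul_eq_mul, socialCost]

theorem exists_mem_card_mul_socialCost_le (hnn : ∀ a b, 0 ≤ d a b)
    (hsym : ∀ a b, d a b = d b a) (htri : ∀ a b c, d a c ≤ d a b + d b c)
    {G : Finset N} (hG : G.Nonempty) (top : N → A) (Z : A)
    (htop : ∀ i ∈ G, d (.inl i) (.inr (top i)) ≤ d (.inl i) (.inr Z)) :
    ∃ i ∈ G, #G * socialCost d (top i) ≤ (#G + 2 * Fintype.card N) * socialCost d Z := by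
  obtain ⟨i, hi, hclosest⟩ := exists_mem_card_mul_le_socialCost hnn hG Z
  refine ⟨i, hi, ?_⟩
  have hZW : d (.inr Z) (.inr (top i)) ≤ 2 * d (.inl i) (.inr Z) := by
    calc d (.inr Z) (.inr (top i)) ≤ d (.inr Z) (.inl i) + d (.inl i) (.inr (top i)) := htri _ _ _
      _ ≤ 2 * d (.inl i) (.inr Z) := by rw [hsym]; linarith [htop i hi]
  calc (#G : ℝ) * socialCost d (top i)
      ≤ #G * (socialCost d Z + Fintype.card N * (2 * d (.inl i) (.inr Z))) := by
        gcongr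
        exact (socialCost_le_add_card_mul htri Z (top i)).trans (by gcongr)
    _ = #G * socialCost d Z + 2 * Fintype.card N * (#G * d (.inl i) (.inr Z)) := by ring
    _ ≤ #G * socialCost d Z + 2 * Fintype.card N * socialCost d Z := by gcongr
    _ = (#G + 2 * Fintype.card N) * socialCost d Z := by ring

end SocialCost

theorem card_filter_not_le_card_mul [Fintype N] [Fintype A] [DecidableEq A] {f : N → A}
    {p : A → Prop} [DecidablePred p] {τ : ℝ} (hτ : 0 ≤ τ)
    (hsmall : ∀ X, ¬p X → (#{i | f i = X} : ℝ) ≤ τ) :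
    (#{i | ¬p (f i)} : ℝ) ≤ Fintype.card A * τ := by
  have hfib : ∀ X ∈ ({X | ¬p X} : Finset A), (#{i ∈ {i | ¬p (f i)} | f i = X} : ℝ) ≤ τ := by
    intro X hX
    refine le_trans ?_ (hsmall X (mem_filter.mp hX).2)
    exact_mod_cast card_le_card (filter_subset_filter _ (filter_subset _ _))
  rw [card_eq_sum_card_fiberwise (t := {X | ¬p X}) fun i hi => by simpa using hi]
  push_cast
  calc _ ≤ #({X | ¬p X} : Finset A) • τ := sum_le_card_nsmul _ _ _ hfib
    _ ≤ Fintype.card A * τ := by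
        rw [nsmul_eq_mul]
        gcongr
        exact_mod_cast card_filter_le _ _

section Ranking

variable {rk : N → A → ℕ}

theorem dist_argmin_le [Nonempty A] (hinj : ∀ i, Function.Injective (rk i))
    {d : N ⊕ A → N ⊕ A → ℝ}
    (hcons : ∀ i X Y, rk i X < rk i Y → d (.inl i) (.inr X) ≤ d (.inl i) (.inr Y)) (i : N)
    (Z : A) : d (.inl i) (.inr (Function.argmin (rk i))) ≤ d (.inl i) (.inr Z) := by
  rcases (Function.argmin_le (rk i) Z).lt_or_eq with hlt | heq
  · exact hcons i _ _ hlt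
  · rw [hinj i heq]

variable [Fintype N] [Fintype A]

variable (rk) in
def pluralitySet (X : A) : Finset N :=
  univ.filter fun i => ∀ Y, rk i X ≤ rk i Y

variable [Nonempty A] [DecidableEq A]

theorem pluralitySet_eq_filter_argmin (hinj : ∀ i, Function.Injective (rk i)) (X : A) :
    pluralitySet rk X = univ.filter fun i => Function.argmin (rk i) = X := by
  ext i
  simp only [pluralitySet, mem_filter, mem_univ, true_and]
  constructor
  · exact fun hX => hinj i ((Function.argmin_le _ X).antisymm (hX _))
  · rintro rfl
    exact fun Y => Function.argmin_le (rk i) Y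

theorem card_sub_card_mul_le_card_filter_argmin (hinj : ∀ i, Function.Injective (rk i)) {τ : ℝ}
    (hτ : 0 ≤ τ) :
    Fintype.card N - Fintype.card A * τ ≤
      #{i | τ ≤ #(pluralitySet rk (Function.argmin (rk i)))} := by
  have hbad : (#{i | ¬τ ≤ #(pluralitySet rk (Function.argmin (rk i)))} : ℝ) ≤
      Fintype.card A * τ := by
    refine card_filter_not_le_card_mul (p := fun X => τ ≤ #(pluralitySet rk X)) hτ fun X hX => ?_
    rw [← pluralitySet_eq_filter_argmin hinj]
    exact (not_le.mp hX).le
  have hsplit : (#{i | τ ≤ #(pluralitySet rk (Function.argmin (rk i)))} : ℝ) +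
      #{i | ¬τ ≤ #(pluralitySet rk (Function.argmin (rk i)))} = Fintype.card N := by
    rw [← card_univ]
    exact_mod_cast card_filter_add_card_filter_not _
  linarith

end Ranking

end MetricDistortion

open MetricDistortion

theorem stmt_19_general {N A : Type*} [Fintype N] [Fintype A]
    (ε : ℝ) (hε : 0 < ε)
    (rk : N → A → ℕ) (hinj : ∀ i, Function.Injective (rk i))
    (d : (N ⊕ A) → (N ⊕ A) → ℝ)
    (hnn : ∀ a b, 0 ≤ d a b)
    (hsym : ∀ a b, d a b = d b a)
    (htri : ∀ a b c, d a c ≤ d a b + d b c)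
    (hcons : ∀ i X Y, rk i X < rk i Y →
      d (Sum.inl i) (Sum.inr X) ≤ d (Sum.inl i) (Sum.inr Y))
    (Xhat : A)
    -- the base rule guarantees metric distortion 3 on the pruned set A'
    (hbase : ∀ Z : A,
      ((Finset.univ.filter (fun i : N => ∀ Y : A, rk i Z ≤ rk i Y)).card : ℝ)
          ≥ ε * (Fintype.card N : ℝ) / ((6 + ε) * (Fintype.card A : ℝ)) →
      ∑ i : N, d (Sum.inl i) (Sum.inr Xhat) ≤
        3 * ∑ i : N, d (Sum.inl i) (Sum.inr Z)) :
    ∀ Z : A,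
      ∑ i : N, d (Sum.inl i) (Sum.inr Xhat) ≤
        (9 + ε) * ∑ i : N, d (Sum.inl i) (Sum.inr Z) := by
  classical
  intro Z
  rcases isEmpty_or_nonempty N with _ | _
  · simp
  have : Nonempty A := ⟨Z⟩
  set n : ℝ := (Fintype.card N : ℝ)
  set τ : ℝ := ε * n / ((6 + ε) * Fintype.card A)
  set G : Finset N := {i | τ ≤ #(pluralitySet rk (Function.argmin (rk i)))}
  have hn : 0 < n := by simp [n, Fintype.card_pos]
  have hmτ : (6 + ε) * (Fintype.card A * τ) = ε * n := by
    have : (0 : ℝ) < Fintype.card A := by simp [Fintype.card_pos]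
    simp only [τ]
    field_simp
  have hgood : 6 * n ≤ (6 + ε) * #G := by
    have hcount := card_sub_card_mul_le_card_filter_argmin hinj (τ := τ) (by positivity)
    nlinarith
  have hG : 0 < (#G : ℝ) := pos_of_mul_pos_right (a := 6 + ε) (by linarith) (by linarith)
  obtain ⟨i, hi, hW⟩ := exists_mem_card_mul_socialCost_le hnn hsym htri
    (card_pos.mp (Nat.cast_pos.mp hG)) (fun i => Function.argmin (rk i)) Z
    fun i _ => dist_argmin_le hinj hcons i Z
  have hXhat : socialCost d Xhat ≤ 3 * socialCost d (Function.argmin (rk i)) :=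
    hbase _ (mem_filter.mp hi).2
  have hZ : 0 ≤ socialCost d Z := sum_nonneg fun _ _ => hnn _ _
  change socialCost d Xhat ≤ (9 + ε) * socialCost d Z
  refine le_of_mul_le_mul_left ?_ hG
  calc (#G : ℝ) * socialCost d Xhat ≤ 3 * (#G * socialCost d (Function.argmin (rk i))) := by
        rw [mul_left_comm]
        gcongr
    _ ≤ 3 * (#G + 2 * n) * socialCost d Z := by rw [mul_assoc]; gcongr
    _ ≤ #G * (9 + ε) * socialCost d Z := by
        apply mul_le_mul_of_nonneg_right _ hZ
        linear_combination hgood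
    _ = #G * ((9 + ε) * socialCost d Z) := mul_assoc _ _ _

/-- Pruned Plurality Veto: restricting to alternatives with plurality score at
least `εn/((6+ε)m)` and applying a base rule whose output `X̂` has social cost
within a factor `3` of the best alternative of the restricted set yields metric
distortion at most `9 + ε`. -/
theorem stmt_19 {N A : Type*} [Fintype N] [Fintype A] [DecidableEq A]
    (hA : 0 < Fintype.card A)
    (ε : ℝ) (hε : 0 < ε)
    (rk : N → A → ℕ) (hinj : ∀ i, Function.Injective (rk i))
    (d : (N ⊕ A) → (N ⊕ A) → ℝ)
    (hnn : ∀ a b, 0 ≤ d a b)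
    (hself : ∀ a, d a a = 0)
    (hsym : ∀ a b, d a b = d b a)
    (htri : ∀ a b c, d a c ≤ d a b + d b c)
    (hcons : ∀ i X Y, rk i X < rk i Y →
      d (Sum.inl i) (Sum.inr X) ≤ d (Sum.inl i) (Sum.inr Y))
    (Xhat : A)
    -- X̂ belongs to the pruned set A'
    (hXhat : ((Finset.univ.filter (fun i : N => ∀ Y : A, rk i Xhat ≤ rk i Y)).card : ℝ)
        ≥ ε * (Fintype.card N : ℝ) / ((6 + ε) * (Fintype.card A : ℝ)))
    -- the base rule guarantees metric distortion 3 on the pruned set A'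
    (hbase : ∀ Z : A,
      ((Finset.univ.filter (fun i : N => ∀ Y : A, rk i Z ≤ rk i Y)).card : ℝ)
          ≥ ε * (Fintype.card N : ℝ) / ((6 + ε) * (Fintype.card A : ℝ)) →
      ∑ i : N, d (Sum.inl i) (Sum.inr Xhat) ≤
        3 * ∑ i : N, d (Sum.inl i) (Sum.inr Z)) :
    ∀ Z : A,
      ∑ i : N, d (Sum.inl i) (Sum.inr Xhat) ≤
        (9 + ε) * ∑ i : N, d (Sum.inl i) (Sum.inr Z) :=
  stmt_19_general ε hε rk hinj d hnn hsym htri hcons Xhat hbase
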